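/- For all real numbers s, t, x, let A = (−1 − s/2, (√3/2)s), B = (1 + t/2, (√3/2)t), C = (x, √3) in ℝ², and let R : ℝ² → ℝ² be the clockwise rotation by π/3, R(a,b) = ((a + √3·b)/2, (−√3·a + b)/2). Then A + R(B − A) = (t − s, −√3), and consequently ‖C − (A + R(B − A))‖² = (t − s − x)² + 12 ≥ (2√3)², so that ‖C − (A + R(B − A))‖ ≥ 2√3. -/
import Mathlib

noncomputable def vec2 (a b : ℝ) : EuclideanSpace ℝ (Fin 2) :=
  (WithLp.equiv 2 (Fin 2 → ℝ)).symm ![a, b]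

noncomputable def RotCW60 (v : EuclideanSpace ℝ (Fin 2)) : EuclideanSpace ℝ (Fin 2) :=
  vec2 ((v 0 + Real.sqrt 3 * v 1) / 2) ((-(Real.sqrt 3) * v 0 + v 1) / 2)

lemma vec2_zero (a b : ℝ) : vec2 a b 0 = a := rfl
lemma vec2_one (a b : ℝ) : vec2 a b 1 = b := rfl

lemma vec2_add (a b c d : ℝ) : vec2 a b + vec2 c d = vec2 (a+c) (b+d) := by
  ext i; fin_cases i <;> rfl

lemma vec2_sub (a b c d : ℝ) : vec2 a b - vec2 c d = vec2 (a-c) (b-d) := by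
  ext i; fin_cases i <;> rfl

lemma vec2_norm_sq (a b : ℝ) : ‖vec2 a b‖ ^ 2 = a ^ 2 + b ^ 2 := by
  rw [EuclideanSpace.norm_eq, Real.sq_sqrt (by positivity)]
  simp [vec2, Fin.sum_univ_two, sq_abs]

/-- For the perturbed midpoints `A`, `B`, `C` of the sides of the equilateral triangle, the apex
`T = A + R(B − A)` of the equilateral triangle erected on `AB` equals `(t − s, −√3)`; consequently
`‖C − T‖² = (t − s − x)² + 12 ≥ (2√3)²` and hence `‖C − T‖ ≥ 2√3`. -/
theorem stmt10 (s t x : ℝ) :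
    vec2 (-1 - s / 2) (Real.sqrt 3 / 2 * s) +
        RotCW60 (vec2 (1 + t / 2) (Real.sqrt 3 / 2 * t) -
          vec2 (-1 - s / 2) (Real.sqrt 3 / 2 * s)) = vec2 (t - s) (-(Real.sqrt 3)) ∧
    ‖vec2 x (Real.sqrt 3) -
        (vec2 (-1 - s / 2) (Real.sqrt 3 / 2 * s) +
          RotCW60 (vec2 (1 + t / 2) (Real.sqrt 3 / 2 * t) -
            vec2 (-1 - s / 2) (Real.sqrt 3 / 2 * s)))‖ ^ 2 = (t - s - x) ^ 2 + 12 ∧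
    (2 * Real.sqrt 3) ^ 2 ≤ (t - s - x) ^ 2 + 12 ∧
    2 * Real.sqrt 3 ≤
      ‖vec2 x (Real.sqrt 3) -
        (vec2 (-1 - s / 2) (Real.sqrt 3 / 2 * s) +
          RotCW60 (vec2 (1 + t / 2) (Real.sqrt 3 / 2 * t) -
            vec2 (-1 - s / 2) (Real.sqrt 3 / 2 * s)))‖ := by
  have h3 : Real.sqrt 3 ^ 2 = 3 := Real.sq_sqrt (by norm_num)
  have h1 : vec2 (-1 - s / 2) (Real.sqrt 3 / 2 * s) +
      RotCW60 (vec2 (1 + t / 2) (Real.sqrt 3 / 2 * t) -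
        vec2 (-1 - s / 2) (Real.sqrt 3 / 2 * s)) = vec2 (t - s) (-(Real.sqrt 3)) := by
    rw [vec2_sub, RotCW60, vec2_zero, vec2_one, vec2_add]
    have ha : -1 - s / 2 + (1 + t / 2 - (-1 - s / 2) + Real.sqrt 3 * (Real.sqrt 3 / 2 * t - Real.sqrt 3 / 2 * s)) / 2 = t - s := by
      linear_combination ((t - s)/4) * Real.mul_self_sqrt (by norm_num : (0:ℝ) ≤ 3)
    have hb : Real.sqrt 3 / 2 * s + (-(Real.sqrt 3) * (1 + t / 2 - (-1 - s / 2)) + (Real.sqrt 3 / 2 * t - Real.sqrt 3 / 2 * s)) / 2 = -(Real.sqrt 3) := by ring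
    rw [ha, hb]
  refine ⟨h1, ?_, ?_, ?_⟩
  · rw [h1, vec2_sub, vec2_norm_sq]; nlinarith [h3]
  · nlinarith [sq_nonneg (t - s - x), h3]
  · rw [h1, vec2_sub]
    have key : (x - (t - s)) ^ 2 + (Real.sqrt 3 - -(Real.sqrt 3)) ^ 2 =
        (t - s - x) ^ 2 + 12 := by nlinarith [h3]
    calc 2 * Real.sqrt 3 = Real.sqrt ((2 * Real.sqrt 3) ^ 2) := by
          rw [Real.sqrt_sq (by positivity)]
      _ ≤ Real.sqrt ((x - (t - s)) ^ 2 + (Real.sqrt 3 - -(Real.sqrt 3)) ^ 2) := by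
          apply Real.sqrt_le_sqrt; rw [key]; nlinarith [sq_nonneg (t - s - x), h3]
      _ = ‖vec2 (x - (t - s)) (Real.sqrt 3 - -(Real.sqrt 3))‖ := by
          rw [← Real.sqrt_sq (norm_nonneg _), vec2_norm_sq]
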